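/- The summatory totient function satisfies the asymptotic formula Ψ(x) = (3/π²) x² + O(x log x) as x → ∞. -/

import Mathlib

/-!
Since `∑_{d ∣ n} φ d = n`, Möbius inversion gives `φ = μ * id`, so with `N = ⌊x⌋`
`Ψ(x) = ∑_{d ≤ N} μ(d) T(⌊x/d⌋)`, where `T(k) = k(k+1)/2`, and `T(⌊x/d⌋) = (x/d)²/2 + O(x/d)`.
The error terms add up to `O(x ∑_{d ≤ N} 1/d) = O(x log x)`, and the main terms to
`(x²/2) ∑_{d ≤ N} μ(d)/d² = (x²/2)(1/ζ(2) + O(1/x))`, with `1/ζ(2) = 6/π²`.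
-/

open Finset Filter Asymptotics ArithmeticFunction Topology
open scoped ArithmeticFunction.Moebius

lemma abs_tsum_sub_sum_Ioc_le {f : ℕ → ℝ} (hf : ∀ n, |f n| ≤ ((n : ℝ) ^ 2)⁻¹) {N : ℕ}
    (hN : N ≠ 0) : |∑' n, f n - ∑ n ∈ Ioc 0 N, f n| ≤ (N : ℝ)⁻¹ := by
  have hsum : Summable f := .of_norm_bounded (Real.summable_nat_pow_inv.mpr one_lt_two) hf
  -- `hf 0` says `|f 0| ≤ 0⁻¹ = 0`.
  have hf0 : f 0 = 0 := by simpa using hf 0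
  have hlim : Tendsto (fun M ↦ ∑ n ∈ Ioc 0 M, f n) atTop (𝓝 (∑' n, f n)) := by
    refine (hsum.hasSum.tendsto_sum_nat.comp (tendsto_add_atTop_nat 1)).congr fun M ↦ ?_
    rw [Function.comp_apply, Nat.range_succ_eq_Icc_zero, Icc_eq_cons_Ioc M.zero_le, sum_cons, hf0,
      zero_add]
  refine le_of_tendsto (hlim.sub_const _).abs ?_
  filter_upwards [eventually_ge_atTop N] with M hM
  rw [← sum_Ioc_consecutive _ N.zero_le hM, add_sub_cancel_left]
  calc |∑ n ∈ Ioc N M, f n| ≤ ∑ n ∈ Ioc N M, ((n : ℝ) ^ 2)⁻¹ :=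
        (abs_sum_le_sum_abs _ _).trans (sum_le_sum fun n _ ↦ hf n)
    _ ≤ (N : ℝ)⁻¹ - (M : ℝ)⁻¹ := sum_Ioc_inv_sq_le_sub hN hM
    _ ≤ (N : ℝ)⁻¹ := sub_le_self _ (by positivity)

lemma abs_moebius_div_sq_le (n : ℕ) : |(μ n : ℝ) / n ^ 2| ≤ ((n : ℝ) ^ 2)⁻¹ := by
  rw [abs_div, abs_of_nonneg (by positivity : (0 : ℝ) ≤ (n : ℝ) ^ 2), div_eq_mul_inv]
  exact mul_le_of_le_one_left (by positivity) (mod_cast abs_moebius_le_one)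

lemma tsum_moebius_div_sq : ∑' n : ℕ, (μ n : ℝ) / n ^ 2 = 6 / Real.pi ^ 2 := by
  set S := ∑' n : ℕ, (μ n : ℝ) / n ^ 2 with hS
  have h2 : 1 < (2 : ℂ).re := by norm_num
  have hL : LSeries (fun n ↦ (μ n : ℂ)) 2 = S := by
    rw [hS, Complex.ofReal_tsum]
    refine tsum_congr fun n ↦ ?_
    rcases eq_or_ne n 0 with rfl | hn
    · simp
    · rw [LSeries.term_of_ne_zero hn, Complex.cpow_two]
      push_cast
      ring
  have hz := LSeries_zeta_mul_Lseries_moebius h2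
  rw [LSeries_zeta_eq_riemannZeta h2, riemannZeta_two, hL] at hz
  have hpi : (Real.pi : ℂ) ^ 2 ≠ 0 := by simp [Real.pi_ne_zero]
  refine Complex.ofReal_injective ?_
  push_cast
  field_simp at hz ⊢
  linear_combination hz

lemma abs_sum_moebius_div_sq_sub_le {N : ℕ} (hN : N ≠ 0) :
    |∑ n ∈ Ioc 0 N, (μ n : ℝ) / n ^ 2 - 6 / Real.pi ^ 2| ≤ (N : ℝ)⁻¹ := by
  rw [← tsum_moebius_div_sq, abs_sub_comm]
  exact abs_tsum_sub_sum_Ioc_le abs_moebius_div_sq_le hN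

lemma totient_eq_moebius_mul_id (n : ℕ) :
    (n.totient : ℝ) =
      ((μ : ArithmeticFunction ℝ) * (ArithmeticFunction.id : ArithmeticFunction ℝ)) n := by
  rcases eq_or_ne n 0 with rfl | hn
  · simp
  have := (sum_eq_iff_sum_mul_moebius_eq (f := fun n ↦ (n.totient : ℝ)) (g := (↑)) |>.mp
    (fun m _ ↦ mod_cast Nat.sum_totient m) n hn.bot_lt)
  simpa [mul_apply] using this.symm

lemma sum_Ioc_natCast (k : ℕ) : ∑ m ∈ Ioc 0 k, (m : ℝ) = k * (k + 1) / 2 := by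
  induction k with
  | zero => simp
  | succ k ih =>
    rw [sum_Ioc_succ_top k.zero_le, ih]
    push_cast
    ring

lemma sum_Ioc_totient (N : ℕ) :
    ∑ n ∈ Ioc 0 N, (n.totient : ℝ) =
      ∑ d ∈ Ioc 0 N, (μ d : ℝ) * ((N / d : ℕ) * ((N / d : ℕ) + 1) / 2) := by
  simp only [totient_eq_moebius_mul_id, sum_Ioc_mul_eq_sum_sum, intCoe_apply, natCoe_apply,
    id_apply, sum_Ioc_natCast]

lemma sum_Ioc_totient_sub_eq (x : ℝ) :
    ∑ n ∈ Ioc 0 ⌊x⌋₊, (n.totient : ℝ) - 3 / Real.pi ^ 2 * x ^ 2 =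
      ∑ d ∈ Ioc 0 ⌊x⌋₊, (μ d : ℝ) * ((⌊x / d⌋₊ * (⌊x / d⌋₊ + 1) - (x / d) ^ 2) / 2) +
        x ^ 2 / 2 * (∑ d ∈ Ioc 0 ⌊x⌋₊, (μ d : ℝ) / d ^ 2 - 6 / Real.pi ^ 2) := by
  have hterm (d : ℕ) : (μ d : ℝ) * ((⌊x⌋₊ / d : ℕ) * ((⌊x⌋₊ / d : ℕ) + 1) / 2) =
      μ d * ((⌊x / d⌋₊ * (⌊x / d⌋₊ + 1) - (x / d) ^ 2) / 2) + x ^ 2 / 2 * (μ d / d ^ 2) := by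
    rw [Nat.floor_div_natCast]
    ring
  rw [sum_Ioc_totient, sum_congr rfl fun d _ ↦ hterm d, sum_add_distrib, ← mul_sum]
  ring

lemma abs_floor_mul_floor_add_one_sub_sq_le {t : ℝ} (ht : 0 ≤ t) :
    |(⌊t⌋₊ : ℝ) * (⌊t⌋₊ + 1) - t ^ 2| ≤ t := by
  have h₁ := Nat.floor_le ht
  have h₂ := Nat.lt_floor_add_one t
  rw [abs_le]
  constructor <;> nlinarith

lemma sum_Ioc_inv_le_one_add_log (N : ℕ) : ∑ n ∈ Ioc 0 N, (n : ℝ)⁻¹ ≤ 1 + Real.log N := by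
  have hI : Icc 1 N = Ioc 0 N := Icc_add_one_left_eq_Ioc 0 N
  have := harmonic_le_one_add_log N
  rw [harmonic_eq_sum_Icc, hI] at this
  push_cast at this
  exact this

lemma abs_sum_moebius_mul_floor_sub_le {x : ℝ} (hx : 0 ≤ x) (N : ℕ) :
    |∑ d ∈ Ioc 0 N, (μ d : ℝ) * ((⌊x / d⌋₊ * (⌊x / d⌋₊ + 1) - (x / d) ^ 2) / 2)|
      ≤ x / 2 * (1 + Real.log N) := by
  have hterm (d : ℕ) :
      |(μ d : ℝ) * ((⌊x / d⌋₊ * (⌊x / d⌋₊ + 1) - (x / d) ^ 2) / 2)| ≤ x / 2 * (d : ℝ)⁻¹ := by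
    rw [abs_mul, abs_div, abs_two]
    calc |(μ d : ℝ)| * (|(⌊x / d⌋₊ : ℝ) * (⌊x / d⌋₊ + 1) - (x / d) ^ 2| / 2)
        ≤ 1 * (x / d / 2) := by
          gcongr
          · exact_mod_cast abs_moebius_le_one
          · exact abs_floor_mul_floor_add_one_sub_sq_le (by positivity)
      _ = x / 2 * (d : ℝ)⁻¹ := by ring
  calc _ ≤ ∑ d ∈ Ioc 0 N, x / 2 * (d : ℝ)⁻¹ :=
        (abs_sum_le_sum_abs _ _).trans (sum_le_sum fun d _ ↦ hterm d)
    _ ≤ x / 2 * (1 + Real.log N) := by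
      rw [← mul_sum]
      gcongr
      exact sum_Ioc_inv_le_one_add_log N

lemma abs_sum_totient_sub_le {x : ℝ} (hx : 1 ≤ x) :
    |∑ n ∈ Ioc 0 ⌊x⌋₊, (n.totient : ℝ) - 3 / Real.pi ^ 2 * x ^ 2| ≤
      (x * Real.log x + 3 * x) / 2 := by
  set N := ⌊x⌋₊
  have hN : N ≠ 0 := (Nat.floor_pos.mpr hx).ne'
  have hNx : (N : ℝ) ≤ x := Nat.floor_le (by linarith)
  have hx2N : x ≤ 2 * N := by
    have := Nat.lt_floor_add_one x
    have : (1 : ℝ) ≤ N := mod_cast Nat.one_le_iff_ne_zero.mpr hN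
    linarith
  have htail : |x ^ 2 / 2 * (∑ d ∈ Ioc 0 N, (μ d : ℝ) / d ^ 2 - 6 / Real.pi ^ 2)| ≤ x := by
    rw [abs_mul, abs_of_nonneg (by positivity)]
    calc _ ≤ x ^ 2 / 2 * (N : ℝ)⁻¹ := by gcongr; exact abs_sum_moebius_div_sq_sub_le hN
      _ ≤ x := by
        rw [← div_eq_mul_inv, div_le_iff₀ (by positivity)]
        nlinarith
  have hlog : Real.log N ≤ Real.log x := Real.log_le_log (by positivity) hNx
  rw [sum_Ioc_totient_sub_eq]
  calc _ ≤ _ := abs_add_le _ _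
    _ ≤ x / 2 * (1 + Real.log x) + x := by
      gcongr
      exact (abs_sum_moebius_mul_floor_sub_le (by linarith) N).trans (by gcongr)
    _ = _ := by ring

/-- `Ψ(x) = (3/π²)x² + O(x log x)` as `x → ∞`. -/
theorem stmt_12 :
    (fun x : ℝ =>
        (∑ n ∈ Finset.Icc 1 ⌊x⌋₊, (Nat.totient n : ℝ)) -
          3 / Real.pi ^ 2 * x ^ 2)
      =O[atTop] fun x : ℝ => x * Real.log x := by
  refine IsBigO.of_bound 2 ?_
  filter_upwards [eventually_ge_atTop (Real.exp 1)] with x hx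
  have hx1 : 1 ≤ x := (Real.one_le_exp zero_le_one).trans hx
  have hlog : 1 ≤ Real.log x := (Real.le_log_iff_exp_le (by linarith)).mpr hx
  have hI : Icc 1 ⌊x⌋₊ = Ioc 0 ⌊x⌋₊ := Icc_add_one_left_eq_Ioc 0 ⌊x⌋₊
  rw [Real.norm_eq_abs, Real.norm_of_nonneg (by nlinarith), hI]
  calc _ ≤ (x * Real.log x + 3 * x) / 2 := abs_sum_totient_sub_le hx1
    _ ≤ 2 * (x * Real.log x) := by nlinarith
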